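/- An unsolvable term (a term with no head normal form) of the λ⊥-calculus has neither a left inverse nor a right inverse. -/

import Mathlib

/-- Terms of the λ⊥-calculus (de Bruijn indices). -/
inductive Tm : Type
  | var : ℕ → Tm
  | bot : Tm
  | lam : Tm → Tm
  | app : Tm → Tm → Tm
  deriving DecidableEq

namespace Tm

/-- Lift (shift by one) all de Bruijn indices ≥ k. -/
def lift : Tm → ℕ → Tm
  | var n, k => if n < k then var n else var (n+1)
  | bot, _ => bot
  | lam M, k => lam (lift M (k+1))
  | app M N, k => app (lift M k) (lift N k)

/-- Capture-avoiding substitution of N for variable k. -/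
def subst : Tm → ℕ → Tm → Tm
  | var n, k, N => if n < k then var n else if n = k then N else var (n-1)
  | bot, _, _ => bot
  | lam M, k, N => lam (subst M (k+1) (lift N 0))
  | app M P, k, N => app (subst M k N) (subst P k N)

/-- One-step β⊥-reduction (compatible closure). -/
inductive Step : Tm → Tm → Prop
  | beta (M N : Tm) : Step (app (lam M) N) (subst M 0 N)
  | botApp (N : Tm) : Step (app bot N) bot
  | botLam : Step (lam bot) bot
  | appL {M M'} (N) : Step M M' → Step (app M N) (app M' N)
  | appR (M) {N N'} : Step N N' → Step (app M N) (app M N')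
  | lamC {M M'} : Step M M' → Step (lam M) (lam M')

/-- Multi-step reduction. -/
def Red : Tm → Tm → Prop := Relation.ReflTransGen Step

/-- β⊥-conversion: M = N iff they have a common reduct. -/
def Conv (M N : Tm) : Prop := ∃ P, Red M P ∧ Red N P

/-- The identity combinator I = λx.x. -/
def iTm : Tm := lam (var 0)

/-- Composition M ∘ N = λz.M(Nz). -/
def comp (M N : Tm) : Tm := lam (app (lift M 0) (app (lift N 0) (var 0)))

/-- Apply M to a list of arguments. -/
def applist (M : Tm) (Ms : List Tm) : Tm := Ms.foldl app M

/-- Iterated λ-abstraction. -/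
def iterLam : ℕ → Tm → Tm
  | 0, M => M
  | n+1, M => lam (iterLam n M)

/-- The selector λt x₁ … xₘ. t  (a simple right inverse). -/
def sel (m : ℕ) : Tm := iterLam (m+1) (var m)

/-- Number of initial λ-abstractions of a term. -/
def leadLams : Tm → ℕ
  | lam M => leadLams M + 1
  | _ => 0

end Tm

mutual
/-- Strict intersection types μ ::= φ | ω | σ → μ. -/
inductive STy : Type
  | tvar : ℕ → STy
  | omega : STy
  | arrow : ITy → STy → STy
/-- Intersections σ ::= μ | σ ∧ σ. -/
inductive ITy : Type
  | strict : STy → ITy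
  | inter : ITy → ITy → ITy
end

/-- The subtyping preorder on (strict) intersection types. -/
inductive SubTy : ITy → ITy → Prop
  | refl (σ) : SubTy σ σ
  | trans {σ τ ρ} : SubTy σ τ → SubTy τ ρ → SubTy σ ρ
  | toOmega (σ) : SubTy σ (.strict .omega)
  | omegaArr : SubTy (.strict .omega) (.strict (.arrow (.strict .omega) .omega))
  | interL (σ τ) : SubTy (.inter σ τ) σ
  | interR (σ τ) : SubTy (.inter σ τ) τ
  | interMono {σ₁ σ₂ τ₁ τ₂} : SubTy σ₁ τ₁ → SubTy σ₂ τ₂ → SubTy (.inter σ₁ σ₂) (.inter τ₁ τ₂)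
  | arrow {σ τ : ITy} {μ ν : STy} : SubTy τ σ → SubTy (.strict μ) (.strict ν) →
      SubTy (.strict (.arrow σ μ)) (.strict (.arrow τ ν))

/-- σ ∼ τ : mutual subtyping. -/
def EqvTy (σ τ : ITy) : Prop := SubTy σ τ ∧ SubTy τ σ

/-- μ is a conjunct (component) of the intersection σ. -/
inductive IsComp : STy → ITy → Prop
  | strict (μ) : IsComp μ (.strict μ)
  | left {μ σ} (τ) : IsComp μ σ → IsComp μ (.inter σ τ)
  | right {μ τ} (σ) : IsComp μ τ → IsComp μ (.inter σ τ)

/-- The essential intersection type assignment system (contexts are de Bruijn lists). -/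
inductive Der : List ITy → Tm → STy → Prop
  | var {Γ n σ μ} : Γ[n]? = some σ → IsComp μ σ → Der Γ (.var n) μ
  | omega (Γ M) : Der Γ M .omega
  | sub {Γ M μ ν} : Der Γ M μ → SubTy (.strict μ) (.strict ν) → Der Γ M ν
  | lam {Γ M σ μ} : Der (σ :: Γ) M μ → Der Γ (.lam M) (.arrow σ μ)
  | app {Γ M N σ μ} : Der Γ M (.arrow σ μ) → (∀ ν, IsComp ν σ → Der Γ N ν) →
      Der Γ (.app M N) μ

/-- A strict type is inhabited if some closed term has it. -/
def InhabS (μ : STy) : Prop := ∃ M, Der [] M μ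

/-- An intersection is inhabited if a single closed term has all its conjuncts. -/
def InhabI (σ : ITy) : Prop := ∃ M, ∀ μ, IsComp μ σ → Der [] M μ

/-- σ → ρ is inhabited: one term inhabits σ → μ for every conjunct μ of ρ. -/
def InhabArrow (σ ρ : ITy) : Prop := ∃ M, ∀ μ, IsComp μ ρ → Der [] M (.arrow σ μ)

/-- ρ₁ → … → ρₘ → μ. -/
def arrows (l : List ITy) (μ : STy) : STy := l.foldr .arrow μ

/-- μ ◁ ν : μ is a retract of ν. -/
def Retract (μ ν : STy) : Prop :=
  ∃ L R, Der [] L (.arrow (.strict ν) μ) ∧ Der [] R (.arrow (.strict μ) ν) ∧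
    Tm.Conv (Tm.comp L R) Tm.iTm

/-- Head normal forms λx₁…xₙ.xⱼM₁…Mₘ. -/
inductive IsHnf : Tm → Prop
  | head (j : ℕ) (Ms : List Tm) : IsHnf (Tm.applist (Tm.var j) Ms)
  | abs {M : Tm} : IsHnf M → IsHnf (Tm.lam M)

/-- A term is solvable iff it reduces to a head normal form. -/
def Solvable (M : Tm) : Prop := ∃ N, Tm.Red M N ∧ IsHnf N

/-!
If `L ∘ M` or `M ∘ R` were convertible to `I = λz.z`, the body `L (M z)`, resp. `M (R z)`,
would reduce to the variable `z`, since `I` is a normal form. A genericity argument rules this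
out: replacing unsolvable subterms by `⊥` turns every reduction into one of the approximated
term, and a variable is still reached. With `M` replaced by `⊥`, the body becomes `L (⊥ z)`,
then `L ⊥`, in which `z` does not occur, resp. `⊥ (R z)`, which is unsolvable.

For the simulation, solvability is read off weak head evaluation (`HeadSolvable`). This form is
reflected by substitution and preserved under expansion along parallel reduction; the latter is a
standardisation argument in the style of Takahashi.
-/

namespace Tm

open Relation

/-! ### Renaming and simultaneous substitution -/

def upRen (f : ℕ → ℕ) : ℕ → ℕ
  | 0 => 0
  | n+1 => f n + 1

def rename : Tm → (ℕ → ℕ) → Tm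
  | var n, f => var (f n)
  | bot, _ => bot
  | lam M, f => lam (rename M (upRen f))
  | app M N, f => app (rename M f) (rename N f)

def upSubst (σ : ℕ → Tm) : ℕ → Tm
  | 0 => var 0
  | n+1 => lift (σ n) 0

def psubst : Tm → (ℕ → Tm) → Tm
  | var n, σ => σ n
  | bot, _ => bot
  | lam M, σ => lam (psubst M (upSubst σ))
  | app M N, σ => app (psubst M σ) (psubst N σ)

def shiftFrom (k : ℕ) (n : ℕ) : ℕ := if n < k then n else n + 1

def substAt (k : ℕ) (N : Tm) (n : ℕ) : Tm := subst (var n) k N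

def consSubst (Q : Tm) (σ : ℕ → Tm) : ℕ → Tm
  | 0 => Q
  | n+1 => σ n

theorem lift_var_zero (n : ℕ) : lift (var n) 0 = var (n + 1) := by
  simp [lift]

theorem substAt_lt {n k : ℕ} (N : Tm) (h : n < k) : substAt k N n = var n := by
  simp [substAt, subst, h]

theorem substAt_self (k : ℕ) (N : Tm) : substAt k N k = N := by
  simp [substAt, subst]

theorem substAt_succ {m k : ℕ} (N : Tm) (h : k ≤ m) : substAt k N (m + 1) = var m := by
  simp only [substAt, subst]
  rw [if_neg (by omega), if_neg (by omega), Nat.add_sub_cancel]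

theorem shiftFrom_lt {n k : ℕ} (h : n < k) : shiftFrom k n = n := if_pos h

theorem shiftFrom_ge {n k : ℕ} (h : k ≤ n) : shiftFrom k n = n + 1 := if_neg (by omega)

theorem upRen_shiftFrom (k : ℕ) : upRen (shiftFrom k) = shiftFrom (k + 1) := by
  funext n
  cases n with
  | zero => simp [upRen, shiftFrom]
  | succ n => simp only [upRen, shiftFrom]; split_ifs <;> omega

theorem lift_eq_rename (M : Tm) (k : ℕ) : lift M k = rename M (shiftFrom k) := by
  induction M generalizing k with
  | var n => simp only [lift, rename, shiftFrom]; split_ifs <;> rfl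
  | bot => rfl
  | lam M ih => simp only [lift, rename, ih, upRen_shiftFrom]
  | app M N ihM ihN => simp only [lift, rename, ihM, ihN]

theorem upSubst_substAt (k : ℕ) (N : Tm) :
    upSubst (substAt k N) = substAt (k + 1) (lift N 0) := by
  funext n
  cases n with
  | zero => rfl
  | succ n =>
    show lift (substAt k N n) 0 = substAt (k + 1) (lift N 0) (n + 1)
    rcases Nat.lt_trichotomy n k with h | rfl | h
    · rw [substAt_lt _ h, substAt_lt _ (by omega), lift_var_zero]
    · rw [substAt_self, substAt_self]
    · obtain ⟨m, rfl⟩ : ∃ m, n = m + 1 := ⟨n - 1, by omega⟩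
      rw [substAt_succ _ (by omega), substAt_succ _ (by omega), lift_var_zero]

theorem subst_eq_psubst (M : Tm) (k : ℕ) (N : Tm) : subst M k N = psubst M (substAt k N) := by
  induction M generalizing k N with
  | var n => rfl
  | bot => rfl
  | lam M ih => simp only [subst, psubst, ih, upSubst_substAt]
  | app M P ihM ihP => simp only [subst, psubst, ihM, ihP]

theorem rename_rename (M : Tm) (f g : ℕ → ℕ) :
    rename (rename M f) g = rename M (g ∘ f) := by
  induction M generalizing f g with
  | var n => rfl
  | bot => rfl
  | lam M ih =>
    have h : upRen g ∘ upRen f = upRen (g ∘ f) := by funext n; cases n <;> rfl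
    simp only [rename, ih, h]
  | app M N ihM ihN => simp only [rename, ihM, ihN]

theorem psubst_rename (M : Tm) (f : ℕ → ℕ) (σ : ℕ → Tm) :
    psubst (rename M f) σ = psubst M (σ ∘ f) := by
  induction M generalizing f σ with
  | var n => rfl
  | bot => rfl
  | lam M ih =>
    have h : upSubst σ ∘ upRen f = upSubst (σ ∘ f) := by funext n; cases n <;> rfl
    simp only [rename, psubst, ih, h]
  | app M N ihM ihN => simp only [rename, psubst, ihM, ihN]

theorem rename_psubst (M : Tm) (σ : ℕ → Tm) (f : ℕ → ℕ) :
    rename (psubst M σ) f = psubst M (fun n => rename (σ n) f) := by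
  induction M generalizing σ f with
  | var n => rfl
  | bot => rfl
  | lam M ih =>
    have h : (fun n => rename (upSubst σ n) (upRen f)) = upSubst (fun n => rename (σ n) f) := by
      funext n
      cases n with
      | zero => rfl
      | succ n =>
        show rename (lift (σ n) 0) (upRen f) = lift (rename (σ n) f) 0
        rw [lift_eq_rename, lift_eq_rename, rename_rename, rename_rename]
        congr 1
    simp only [rename, psubst, ih, h]
  | app M N ihM ihN => simp only [rename, psubst, ihM, ihN]

theorem psubst_lift_upSubst (M : Tm) (σ : ℕ → Tm) :
    psubst (lift M 0) (upSubst σ) = lift (psubst M σ) 0 := by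
  rw [lift_eq_rename, psubst_rename, lift_eq_rename, rename_psubst]
  congr 1
  funext m
  rw [Function.comp_apply, shiftFrom_ge (Nat.zero_le m), ← lift_eq_rename]
  rfl

theorem psubst_psubst (M : Tm) (σ τ : ℕ → Tm) :
    psubst (psubst M σ) τ = psubst M (fun n => psubst (σ n) τ) := by
  induction M generalizing σ τ with
  | var n => rfl
  | bot => rfl
  | lam M ih =>
    have h : (fun n => psubst (upSubst σ n) (upSubst τ)) =
        upSubst (fun n => psubst (σ n) τ) := by
      funext n
      cases n with
      | zero => rfl
      | succ n => exact psubst_lift_upSubst (σ n) τ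
    simp only [psubst, ih, h]
  | app M N ihM ihN => simp only [psubst, ihM, ihN]

theorem psubst_var (M : Tm) : psubst M var = M := by
  induction M with
  | var n => rfl
  | bot => rfl
  | lam M ih =>
    have h : upSubst var = var := by
      funext n
      cases n with
      | zero => rfl
      | succ n => exact lift_var_zero n
    simp only [psubst, h, ih]
  | app M N ihM ihN => simp only [psubst, ihM, ihN]

theorem rename_eq_psubst (M : Tm) (f : ℕ → ℕ) : rename M f = psubst M (var ∘ f) := by
  induction M generalizing f with
  | var n => rfl
  | bot => rfl
  | lam M ih =>
    have h : upSubst (var ∘ f) = var ∘ upRen f := by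
      funext n
      cases n with
      | zero => rfl
      | succ n => exact lift_var_zero (f n)
    simp only [rename, psubst, ih, h]
  | app M N ihM ihN => simp only [rename, psubst, ihM, ihN]

theorem lift_eq_psubst (M : Tm) (k : ℕ) : lift M k = psubst M (var ∘ shiftFrom k) := by
  rw [lift_eq_rename, rename_eq_psubst]

theorem subst_lift (M : Tm) (k : ℕ) (N : Tm) : subst (lift M k) k N = M := by
  rw [lift_eq_rename, subst_eq_psubst, psubst_rename]
  have h : substAt k N ∘ shiftFrom k = var := by
    funext n
    rcases Nat.lt_or_ge n k with h | h
    · rw [Function.comp_apply, shiftFrom_lt h, substAt_lt _ h]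
    · rw [Function.comp_apply, shiftFrom_ge h, substAt_succ _ h]
  rw [h, psubst_var]

theorem subst_psubst_upSubst (P : Tm) (σ : ℕ → Tm) (Q : Tm) :
    subst (psubst P (upSubst σ)) 0 Q = psubst P (consSubst Q σ) := by
  rw [subst_eq_psubst, psubst_psubst]
  congr 1
  funext n
  cases n with
  | zero => rfl
  | succ m => rw [← subst_eq_psubst]; exact subst_lift (σ m) 0 Q

theorem psubst_subst (P Q : Tm) (σ : ℕ → Tm) :
    psubst (subst P 0 Q) σ = subst (psubst P (upSubst σ)) 0 (psubst Q σ) := by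
  rw [subst_psubst_upSubst, subst_eq_psubst, psubst_psubst]
  congr 1
  funext n
  cases n with
  | zero => rfl
  | succ m => rw [substAt_succ _ (Nat.zero_le m)]; rfl

theorem rename_subst (P Q : Tm) (f : ℕ → ℕ) :
    rename (subst P 0 Q) f = subst (rename P (upRen f)) 0 (rename Q f) := by
  simp only [rename_eq_psubst, psubst_subst]
  congr 2
  funext n
  cases n with
  | zero => rfl
  | succ m => exact lift_var_zero (f m)

theorem lift_subst (P Q : Tm) (k : ℕ) :
    lift (subst P 0 Q) k = subst (lift P (k + 1)) 0 (lift Q k) := by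
  rw [lift_eq_rename, rename_subst, upRen_shiftFrom, ← lift_eq_rename, ← lift_eq_rename]

/-! ### Weak head evaluation -/

theorem red_app_left {M M' : Tm} (N : Tm) (h : Red M M') : Red (app M N) (app M' N) :=
  h.lift (app · N) fun _ _ => Step.appL N

theorem red_app_right (M : Tm) {N N' : Tm} (h : Red N N') : Red (app M N) (app M N') :=
  h.lift (app M) fun _ _ => Step.appR M

theorem red_lam {M M' : Tm} (h : Red M M') : Red (lam M) (lam M') :=
  h.lift lam fun _ _ => Step.lamC

inductive WHStep : Tm → Tm → Prop
  | beta (P Q : Tm) : WHStep (app (lam P) Q) (subst P 0 Q)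
  | botApp (Q : Tm) : WHStep (app bot Q) bot
  | appL {P P' : Tm} (Q : Tm) : WHStep P P' → WHStep (app P Q) (app P' Q)

def IsWhnf (T : Tm) : Prop := ∀ U, ¬ WHStep T U

inductive IsNeutral : Tm → Prop
  | var (n : ℕ) : IsNeutral (var n)
  | app {P : Tm} (Q : Tm) : IsNeutral P → IsNeutral (app P Q)

/-- `n` is only an upper bound on the number of steps. -/
inductive WHEvalIn : ℕ → Tm → Tm → Prop
  | refl {T : Tm} (n : ℕ) : IsWhnf T → WHEvalIn n T T
  | step {T T₁ W : Tm} {n : ℕ} : WHStep T T₁ → WHEvalIn n T₁ W → WHEvalIn (n + 1) T W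

def WHEval (T W : Tm) : Prop := ∃ n, WHEvalIn n T W

theorem isWhnf_var (n : ℕ) : IsWhnf (var n) := fun _ h => nomatch h

theorem isWhnf_bot : IsWhnf bot := fun _ h => nomatch h

theorem isWhnf_lam (M : Tm) : IsWhnf (lam M) := fun _ h => nomatch h

theorem IsWhnf.of_app {A B : Tm} (h : IsWhnf (app A B)) : IsWhnf A :=
  fun _ hU => h _ (WHStep.appL B hU)

theorem IsNeutral.isWhnf {P : Tm} (h : IsNeutral P) : IsWhnf P := by
  induction h with
  | var n => exact isWhnf_var n
  | app Q hP ih =>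
    intro _ hU
    cases hU with
    | beta => cases hP
    | botApp => cases hP
    | appL _ h => exact ih _ h

theorem IsWhnf.lam_or_bot_or_neutral {T : Tm} (h : IsWhnf T) :
    (∃ R, T = lam R) ∨ T = bot ∨ IsNeutral T := by
  induction T with
  | var n => exact .inr (.inr (.var n))
  | bot => exact .inr (.inl rfl)
  | lam R => exact .inl ⟨R, rfl⟩
  | app A B ihA =>
    rcases ihA h.of_app with ⟨R, rfl⟩ | rfl | hA
    · exact absurd (WHStep.beta R B) (h _)
    · exact absurd (WHStep.botApp B) (h _)
    · exact .inr (.inr (.app B hA))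

theorem WHStep.step {T T₁ : Tm} (h : WHStep T T₁) : Step T T₁ := by
  induction h with
  | beta P Q => exact Step.beta P Q
  | botApp Q => exact Step.botApp Q
  | appL Q _ ih => exact Step.appL Q ih

theorem WHEvalIn.isWhnf {n : ℕ} {T W : Tm} (h : WHEvalIn n T W) : IsWhnf W := by
  induction h with
  | refl _ h => exact h
  | step _ _ ih => exact ih

theorem WHEvalIn.eq_of_isWhnf {n : ℕ} {T W : Tm} (hT : IsWhnf T) (h : WHEvalIn n T W) :
    W = T := by
  cases h with
  | refl => rfl
  | step h _ => exact absurd h (hT _)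

theorem WHEvalIn.red {n : ℕ} {T W : Tm} (h : WHEvalIn n T W) : Red T W := by
  induction h with
  | refl => exact ReflTransGen.refl
  | step h _ ih => exact ReflTransGen.head h.step ih

theorem WHEval.isWhnf {T W : Tm} (h : WHEval T W) : IsWhnf W := h.choose_spec.isWhnf

theorem WHEval.red {T W : Tm} (h : WHEval T W) : Red T W := h.choose_spec.red

theorem WHEval.refl {T : Tm} (h : IsWhnf T) : WHEval T T := ⟨0, .refl 0 h⟩

theorem WHEval.head {T T₁ W : Tm} (h : WHStep T T₁) : WHEval T₁ W → WHEval T W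
  | ⟨n, h₁⟩ => ⟨n + 1, .step h h₁⟩

theorem WHEval.head_star {T T₁ W : Tm} (h : ReflTransGen WHStep T T₁) (h₁ : WHEval T₁ W) :
    WHEval T W := by
  induction h using ReflTransGen.head_induction_on with
  | refl => exact h₁
  | head h _ ih => exact .head h ih

theorem WHEval.app_left {A V : Tm} (h : WHEval A V) (B : Tm) :
    ReflTransGen WHStep (app A B) (app V B) := by
  obtain ⟨n, h⟩ := h
  induction h with
  | refl => exact ReflTransGen.refl
  | step h _ ih => exact ReflTransGen.head (.appL B h) ih

theorem WHEvalIn.app_inv {n : ℕ} {A B W : Tm} (h : WHEvalIn n (app A B) W) :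
    ∃ k V, k ≤ n ∧ WHEvalIn k A V ∧
      ((∃ R, V = lam R ∧ ∃ j, j + k < n ∧ WHEvalIn j (subst R 0 B) W) ∨
       (V = bot ∧ W = bot) ∨
       (IsNeutral V ∧ W = app V B)) := by
  generalize hT : app A B = T at h
  induction h generalizing A with
  | refl n hw =>
    subst hT
    rcases hw.of_app.lam_or_bot_or_neutral with ⟨R, rfl⟩ | rfl | hA
    · exact absurd (WHStep.beta R B) (hw _)
    · exact absurd (WHStep.botApp B) (hw _)
    · exact ⟨0, A, Nat.zero_le n, .refl 0 hA.isWhnf, .inr (.inr ⟨hA, rfl⟩)⟩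
  | step hwh hev ih =>
    subst hT
    cases hwh with
    | beta P Q =>
      exact ⟨0, lam P, Nat.zero_le _, .refl 0 (isWhnf_lam P),
        .inl ⟨P, rfl, _, by omega, hev⟩⟩
    | botApp Q =>
      exact ⟨0, bot, Nat.zero_le _, .refl 0 isWhnf_bot,
        .inr (.inl ⟨rfl, hev.eq_of_isWhnf isWhnf_bot⟩)⟩
    | appL Q hA =>
      obtain ⟨k, V, hk, hEv, hcase⟩ := ih rfl
      refine ⟨k + 1, V, by omega, .step hA hEv, ?_⟩
      rcases hcase with ⟨R, rfl, j, hj, hEv₂⟩ | h | h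
      · exact .inl ⟨R, rfl, j, by omega, hEv₂⟩
      · exact .inr (.inl h)
      · exact .inr (.inr h)

theorem WHEval.app_bot_inv {B W : Tm} (h : WHEval (app bot B) W) : W = bot := by
  obtain ⟨n, h⟩ := h
  cases h with
  | refl _ hw => exact absurd (WHStep.botApp B) (hw _)
  | step hwh hev =>
    cases hwh with
    | botApp => exact hev.eq_of_isWhnf isWhnf_bot
    | appL _ h => cases h

/-! ### Solvability through weak head evaluation -/

theorem WHStep.map_psubst {T T₁ : Tm} (h : WHStep T T₁) (σ : ℕ → Tm) :
    WHStep (psubst T σ) (psubst T₁ σ) := by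
  induction h with
  | beta P Q => rw [psubst_subst]; exact .beta _ _
  | botApp Q => exact .botApp _
  | appL Q _ ih => exact .appL _ ih

theorem IsWhnf.of_psubst {T : Tm} {σ : ℕ → Tm} (h : IsWhnf (psubst T σ)) : IsWhnf T :=
  fun _ hU => h _ (hU.map_psubst σ)

theorem WHStep.of_psubst {T Y : Tm} {σ : ℕ → Tm} (h : WHStep (psubst T σ) Y) :
    IsNeutral T ∨ ∃ T₁, WHStep T T₁ ∧ Y = psubst T₁ σ := by
  induction T generalizing Y with
  | var n => exact .inl (.var n)
  | bot => cases h
  | lam => cases h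
  | app A B ihA =>
    cases A with
    | var n => exact .inl (.app _ (.var n))
    | bot =>
      cases h with
      | botApp => exact .inr ⟨bot, .botApp B, rfl⟩
      | appL _ h => cases h
    | lam P =>
      cases h with
      | beta => exact .inr ⟨subst P 0 B, .beta P B, (psubst_subst P B σ).symm⟩
      | appL _ h => cases h
    | app A₁ A₂ =>
      cases h with
      | appL _ h =>
        rcases ihA h with hA | ⟨T₁, hT₁, rfl⟩
        · exact .inl (.app _ hA)
        · exact .inr ⟨app T₁ B, .appL _ hT₁, rfl⟩

theorem WHEval.of_psubst {T W : Tm} {σ : ℕ → Tm} (h : WHEval (psubst T σ) W) :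
    ∃ T₀, WHEval T T₀ ∧ (IsNeutral T₀ ∨ (IsWhnf T₀ ∧ W = psubst T₀ σ)) := by
  obtain ⟨n, h⟩ := h
  generalize hX : psubst T σ = X at h
  induction h generalizing T with
  | refl _ hw =>
    subst hX
    exact ⟨T, .refl hw.of_psubst, .inr ⟨hw.of_psubst, rfl⟩⟩
  | step hwh _ ih =>
    subst hX
    rcases hwh.of_psubst with hT | ⟨T₁, hT₁, rfl⟩
    · exact ⟨T, .refl hT.isWhnf, .inl hT⟩
    · obtain ⟨T₀, hev, hc⟩ := ih rfl
      exact ⟨T₀, .head hT₁ hev, hc⟩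

inductive HeadSolvable : Tm → Prop
  | neutral {T V : Tm} : WHEval T V → IsNeutral V → HeadSolvable T
  | lam {T R : Tm} : WHEval T (lam R) → HeadSolvable R → HeadSolvable T

theorem headSolvable_var (n : ℕ) : HeadSolvable (var n) :=
  .neutral (.refl (isWhnf_var n)) (.var n)

theorem not_headSolvable_bot : ¬ HeadSolvable bot := by
  rintro (⟨hev, hV⟩ | ⟨hev, -⟩) <;> obtain ⟨n, hev⟩ := hev
  · rw [hev.eq_of_isWhnf isWhnf_bot] at hV
    cases hV
  · cases hev.eq_of_isWhnf isWhnf_bot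

theorem not_headSolvable_bot_app (B : Tm) : ¬ HeadSolvable (app bot B) := by
  rintro (⟨hev, hV⟩ | ⟨hev, -⟩)
  · rw [hev.app_bot_inv] at hV
    cases hV
  · cases hev.app_bot_inv

theorem IsNeutral.isHnf {V : Tm} (h : IsNeutral V) : IsHnf V := by
  suffices ∃ j Ms, V = applist (Tm.var j) Ms by
    obtain ⟨j, Ms, rfl⟩ := this
    exact .head j Ms
  induction h with
  | var n => exact ⟨n, [], rfl⟩
  | app Q _ ih =>
    obtain ⟨j, Ms, rfl⟩ := ih
    exact ⟨j, Ms ++ [Q], by simp [applist]⟩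

theorem HeadSolvable.solvable {T : Tm} (h : HeadSolvable T) : Solvable T := by
  induction h with
  | neutral hev hV => exact ⟨_, hev.red, hV.isHnf⟩
  | lam hev _ ih =>
    obtain ⟨H, hred, hH⟩ := ih
    exact ⟨Tm.lam H, hev.red.trans (red_lam hred), .abs hH⟩

theorem HeadSolvable.of_psubst {T : Tm} {σ : ℕ → Tm} (h : HeadSolvable (psubst T σ)) :
    HeadSolvable T := by
  generalize hX : psubst T σ = X at h
  induction h generalizing T σ with
  | neutral hev hV =>
    subst hX
    obtain ⟨T₀, hT, hT₀ | ⟨hw, rfl⟩⟩ := hev.of_psubst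
    · exact .neutral hT hT₀
    rcases hw.lam_or_bot_or_neutral with ⟨R, rfl⟩ | rfl | hT₀
    · cases hV
    · cases hV
    · exact .neutral hT hT₀
  | lam hev _ ih =>
    subst hX
    obtain ⟨T₀, hT, hT₀ | ⟨hw, hW⟩⟩ := hev.of_psubst
    · exact .neutral hT hT₀
    rcases hw.lam_or_bot_or_neutral with ⟨R, rfl⟩ | rfl | hT₀
    · cases hW
      exact .lam hT (ih rfl)
    · cases hW
    · exact .neutral hT hT₀

theorem HeadSolvable.of_subst {T : Tm} {k : ℕ} {N : Tm} (h : HeadSolvable (subst T k N)) :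
    HeadSolvable T :=
  .of_psubst (subst_eq_psubst T k N ▸ h)

theorem HeadSolvable.of_lift {T : Tm} {k : ℕ} (h : HeadSolvable (lift T k)) : HeadSolvable T :=
  .of_psubst (lift_eq_psubst T k ▸ h)

/-! ### Parallel reduction and standardisation -/

inductive Par : Tm → Tm → Prop
  | var (n : ℕ) : Par (var n) (var n)
  | bot : Par bot bot
  | lam {M M' : Tm} : Par M M' → Par (lam M) (lam M')
  | app {M M' N N' : Tm} : Par M M' → Par N N' → Par (app M N) (app M' N')
  | beta {P P' Q Q' : Tm} : Par P P' → Par Q Q' → Par (app (lam P) Q) (subst P' 0 Q')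
  | botApp (N : Tm) : Par (app bot N) bot
  | botLam : Par (lam bot) bot

theorem Par.refl (M : Tm) : Par M M := by
  induction M with
  | var n => exact .var n
  | bot => exact .bot
  | lam M ih => exact .lam ih
  | app M N ihM ihN => exact .app ihM ihN

theorem Step.par {M N : Tm} (h : Step M N) : Par M N := by
  induction h with
  | beta M N => exact .beta (.refl M) (.refl N)
  | botApp N => exact .botApp N
  | botLam => exact .botLam
  | appL N _ ih => exact .app ih (.refl N)
  | appR M _ ih => exact .app (.refl M) ih
  | lamC _ ih => exact .lam ih

theorem Par.rename {M M' : Tm} (h : Par M M') (f : ℕ → ℕ) :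
    Par (rename M f) (rename M' f) := by
  induction h generalizing f with
  | var n => exact .refl _
  | bot => exact .bot
  | lam _ ih => exact .lam (ih _)
  | app _ _ ihM ihN => exact .app (ihM f) (ihN f)
  | beta _ _ ihP ihQ => rw [rename_subst]; exact .beta (ihP _) (ihQ f)
  | botApp N => exact .botApp _
  | botLam => exact .botLam

theorem Par.lift {M M' : Tm} (h : Par M M') (k : ℕ) : Par (lift M k) (lift M' k) := by
  rw [lift_eq_rename, lift_eq_rename]
  exact h.rename _

theorem Par.upSubst {σ σ' : ℕ → Tm} (hσ : ∀ i, Par (σ i) (σ' i)) :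
    ∀ i, Par (upSubst σ i) (upSubst σ' i)
  | 0 => .var 0
  | i + 1 => (hσ i).lift 0

theorem Par.consSubst {Q Q' : Tm} {σ σ' : ℕ → Tm} (hQ : Par Q Q')
    (hσ : ∀ i, Par (σ i) (σ' i)) :
    ∀ i, Par (consSubst Q σ i) (consSubst Q' σ' i)
  | 0 => hQ
  | i + 1 => hσ i

theorem Par.psubst {M M' : Tm} (h : Par M M') {σ σ' : ℕ → Tm}
    (hσ : ∀ i, Par (σ i) (σ' i)) :
    Par (psubst M σ) (psubst M' σ') := by
  induction h generalizing σ σ' with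
  | var n => exact hσ n
  | bot => exact .bot
  | lam _ ih => exact .lam (ih (.upSubst hσ))
  | app _ _ ihM ihN => exact .app (ihM hσ) (ihN hσ)
  | beta _ _ ihP ihQ => rw [psubst_subst]; exact .beta (ihP (.upSubst hσ)) (ihQ hσ)
  | botApp N => exact .botApp _
  | botLam => exact .botLam

theorem Par.subst {P P' Q Q' : Tm} (hP : Par P P') (hQ : Par Q Q') (k : ℕ) :
    Par (subst P k Q) (subst P' k Q') := by
  rw [subst_eq_psubst, subst_eq_psubst]
  refine hP.psubst fun i => ?_
  simp only [substAt, Tm.subst]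
  split_ifs
  exacts [.refl _, hQ, .refl _]

theorem IsWhnf.par_lam_inv {V R' : Tm} (hw : IsWhnf V) (h : Par V (lam R')) :
    ∃ R, V = lam R ∧ Par R R' := by
  generalize hL : lam R' = L at h
  cases h with
  | lam h => cases hL; exact ⟨_, rfl, h⟩
  | beta => exact absurd (WHStep.beta _ _) (hw _)
  | _ => cases hL

theorem IsWhnf.par_bot_inv {V : Tm} (hw : IsWhnf V) (h : Par V bot) :
    V = bot ∨ V = lam bot := by
  generalize hB : bot = B at h
  cases h with
  | bot => exact .inl rfl
  | beta => exact absurd (WHStep.beta _ _) (hw _)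
  | botApp => exact absurd (WHStep.botApp _) (hw _)
  | botLam => exact .inr rfl
  | _ => cases hB

theorem IsWhnf.isNeutral_of_par {V V' : Tm} (hw : IsWhnf V) (h : Par V V') (hV' : IsNeutral V') :
    IsNeutral V := by
  induction h with
  | var n => exact .var n
  | app _ _ ihM =>
    cases hV' with
    | app _ hM => exact .app _ (ihM hw.of_app hM)
  | beta => exact absurd (WHStep.beta _ _) (hw _)
  | _ => cases hV'

def EvalPullsBack (n : ℕ) (T T' : Tm) : Prop :=
  ∀ k ≤ n, ∀ W', WHEvalIn k T' W' → ∃ W, WHEval T W ∧ Par W W'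

theorem evalPullsBack_of_isWhnf {n : ℕ} {T T' W : Tm} (hT' : IsWhnf T') (hev : WHEval T W)
    (hW : Par W T') : EvalPullsBack n T T' := by
  intro k _ W' hev'
  rw [hev'.eq_of_isWhnf hT']
  exact ⟨W, hev, hW⟩

theorem EvalPullsBack.head {n : ℕ} {T T₁ T' : Tm} (hT : WHStep T T₁)
    (h : EvalPullsBack n T₁ T') : EvalPullsBack n T T' := by
  intro k hk W' hev'
  obtain ⟨W, hev, hW⟩ := h k hk W' hev'
  exact ⟨W, .head hT hev, hW⟩

theorem EvalPullsBack.app {n : ℕ} (ih : ∀ m < n, ∀ {T T'}, Par T T' → EvalPullsBack m T T')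
    {A A' B B' : Tm} (hA : EvalPullsBack n A A') (hB : Par B B') :
    EvalPullsBack n (app A B) (app A' B') := by
  intro k hk W' hev'
  obtain ⟨k₁, V', hk₁, hevA', hcase⟩ := hev'.app_inv
  obtain ⟨V, hevA, hV⟩ := hA k₁ (hk₁.trans hk) V' hevA'
  have hAB := hevA.app_left B
  rcases hcase with ⟨R', rfl, j, hj, hev₂⟩ | ⟨rfl, rfl⟩ | ⟨hV', rfl⟩
  · obtain ⟨R, rfl, hR⟩ := hevA.isWhnf.par_lam_inv hV
    obtain ⟨W, hev, hW⟩ := ih j (by omega) (hR.subst hB 0) j le_rfl W' hev₂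
    exact ⟨W, .head_star hAB (.head (.beta R B) hev), hW⟩
  · refine ⟨bot, .head_star hAB ?_, .bot⟩
    rcases hevA.isWhnf.par_bot_inv hV with rfl | rfl
    · exact .head (.botApp B) (.refl isWhnf_bot)
    · exact .head (.beta bot B) (.refl isWhnf_bot)
  · have hVn := hevA.isWhnf.isNeutral_of_par hV hV'
    exact ⟨Tm.app V B, .head_star hAB (.refl (IsNeutral.app B hVn).isWhnf), .app hV hB⟩

/-- The induction behind `Par.evalPullsBack`, generalised over simultaneous substitutions so
that the β case, which substitutes into the body of the redex, stays inside it. -/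
theorem Par.evalPullsBack_psubst {n : ℕ}
    (ih : ∀ m < n, ∀ {T T'}, Par T T' → EvalPullsBack m T T') {R R' : Tm} (hR : Par R R')
    {σ σ' : ℕ → Tm} (hσ : ∀ i, Par (σ i) (σ' i))
    (hσn : ∀ i, EvalPullsBack n (σ i) (σ' i)) :
    EvalPullsBack n (Tm.psubst R σ) (Tm.psubst R' σ') := by
  induction hR generalizing σ σ' with
  | var i => exact hσn i
  | bot => exact evalPullsBack_of_isWhnf isWhnf_bot (.refl isWhnf_bot) .bot
  | lam hM =>
    exact evalPullsBack_of_isWhnf (isWhnf_lam _) (.refl (isWhnf_lam _))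
      (.lam (hM.psubst (.upSubst hσ)))
  | app _ hN ihM => exact .app ih (ihM hσ hσn) (hN.psubst hσ)
  | beta _ hQ ihP ihQ =>
    rw [psubst_subst, subst_psubst_upSubst]
    refine .head (.beta _ _) ?_
    rw [subst_psubst_upSubst]
    refine ihP (.consSubst (hQ.psubst hσ) hσ) fun i => ?_
    cases i with
    | zero => exact ihQ hσ hσn
    | succ i => exact hσn i
  | botApp N =>
    exact evalPullsBack_of_isWhnf isWhnf_bot (.head (.botApp _) (.refl isWhnf_bot)) .bot
  | botLam => exact evalPullsBack_of_isWhnf isWhnf_bot (.refl (isWhnf_lam _)) .botLam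

theorem Par.evalPullsBack {T T' : Tm} (h : Par T T') (n : ℕ) : EvalPullsBack n T T' := by
  induction n using Nat.strong_induction_on generalizing T T' with
  | _ n ih =>
    have hvar (i : ℕ) : EvalPullsBack n (Tm.var i) (Tm.var i) :=
      evalPullsBack_of_isWhnf (isWhnf_var i) (.refl (isWhnf_var i)) (.var i)
    simpa only [psubst_var] using
      h.evalPullsBack_psubst (fun m hm _ _ => ih m hm) Par.var hvar

theorem Par.exists_whEval {T T' W' : Tm} (h : Par T T') (hev : WHEval T' W') :
    ∃ W, WHEval T W ∧ Par W W' :=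
  let ⟨n, hev⟩ := hev
  h.evalPullsBack n n le_rfl W' hev

theorem HeadSolvable.of_par {T T' : Tm} (h : Par T T') (hT' : HeadSolvable T') :
    HeadSolvable T := by
  induction hT' generalizing T with
  | neutral hev hV =>
    obtain ⟨W, hevW, hW⟩ := h.exists_whEval hev
    exact .neutral hevW (hevW.isWhnf.isNeutral_of_par hW hV)
  | lam hev _ ih =>
    obtain ⟨W, hevW, hW⟩ := h.exists_whEval hev
    obtain ⟨R, rfl, hR⟩ := hevW.isWhnf.par_lam_inv hW
    exact .lam hevW (ih hR)

theorem HeadSolvable.of_red {T T' : Tm} (h : Red T T') (hT' : HeadSolvable T') :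
    HeadSolvable T := by
  induction h using ReflTransGen.head_induction_on with
  | refl => exact hT'
  | head hstep _ ih => exact .of_par hstep.par ih

/-! ### Approximation by `⊥` -/

inductive BotApprox : Tm → Tm → Prop
  | bot {T : Tm} : ¬ HeadSolvable T → BotApprox T bot
  | var (n : ℕ) : BotApprox (var n) (var n)
  | lam {A B : Tm} : BotApprox A B → BotApprox (lam A) (lam B)
  | app {A B C D : Tm} : BotApprox A B → BotApprox C D → BotApprox (app A C) (app B D)

theorem BotApprox.refl (M : Tm) : BotApprox M M := by
  induction M with
  | var n => exact .var n
  | bot => exact .bot not_headSolvable_bot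
  | lam M ih => exact .lam ih
  | app M N ihM ihN => exact .app ihM ihN

theorem BotApprox.lift {A B : Tm} (h : BotApprox A B) (k : ℕ) :
    BotApprox (lift A k) (lift B k) := by
  induction h generalizing k with
  | bot hns => exact .bot fun hs => hns hs.of_lift
  | var n => exact .refl _
  | lam _ ih => exact .lam (ih (k + 1))
  | app _ _ ihM ihN => exact .app (ihM k) (ihN k)

theorem BotApprox.subst {A B Q Q' : Tm} (h : BotApprox A B) (hQ : BotApprox Q Q') (k : ℕ) :
    BotApprox (subst A k Q) (subst B k Q') := by
  induction h generalizing Q Q' k with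
  | bot hns => exact .bot fun hs => hns hs.of_subst
  | var n =>
    simp only [Tm.subst]
    split_ifs
    exacts [.refl _, hQ, .refl _]
  | lam _ ih => exact .lam (ih (hQ.lift 0) (k + 1))
  | app _ _ ihM ihN => exact .app (ihM hQ k) (ihN hQ k)

/-- A redex of `T` that is lost in `U` sits inside an unsolvable subterm, whose reducts stay
unsolvable. -/
theorem BotApprox.step {T T' U : Tm} (hT : Step T T') (hU : BotApprox T U) :
    ∃ U', Red U U' ∧ BotApprox T' U' := by
  induction hT generalizing U with
  | beta P Q =>
    cases hU with
    | bot hns => exact ⟨_, .refl, .bot fun hs => hns (.of_par (Step.beta P Q).par hs)⟩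
    | app hU₁ hU₂ =>
      cases hU₁ with
      | bot hns =>
        refine ⟨_, .single (.botApp _), .bot fun hs => hns ?_⟩
        exact .lam (.refl (isWhnf_lam P)) hs.of_subst
      | lam hP => exact ⟨_, .single (.beta _ _), hP.subst hU₂ 0⟩
  | botApp N =>
    cases hU with
    | bot => exact ⟨_, .refl, .bot not_headSolvable_bot⟩
    | app hU₁ _ =>
      cases hU₁
      exact ⟨_, .single (.botApp _), .bot not_headSolvable_bot⟩
  | botLam =>
    cases hU with
    | bot => exact ⟨_, .refl, .bot not_headSolvable_bot⟩
    | lam hU₁ =>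
      cases hU₁
      exact ⟨_, .single .botLam, .bot not_headSolvable_bot⟩
  | appL N hM ih =>
    cases hU with
    | bot hns => exact ⟨_, .refl, .bot fun hs => hns (.of_par (Step.appL N hM).par hs)⟩
    | app hU₁ hU₂ =>
      obtain ⟨U₁, hred, hU₁'⟩ := ih hU₁
      exact ⟨_, red_app_left _ hred, .app hU₁' hU₂⟩
  | appR M hN ih =>
    cases hU with
    | bot hns => exact ⟨_, .refl, .bot fun hs => hns (.of_par (Step.appR M hN).par hs)⟩
    | app hU₁ hU₂ =>
      obtain ⟨U₂, hred, hU₂'⟩ := ih hU₂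
      exact ⟨_, red_app_right _ hred, .app hU₁ hU₂'⟩
  | lamC hM ih =>
    cases hU with
    | bot hns => exact ⟨_, .refl, .bot fun hs => hns (.of_par (Step.lamC hM).par hs)⟩
    | lam hU₁ =>
      obtain ⟨U₁, hred, hU₁'⟩ := ih hU₁
      exact ⟨_, red_lam hred, .lam hU₁'⟩

theorem BotApprox.red {T T' U : Tm} (hT : Red T T') (hU : BotApprox T U) :
    ∃ U', Red U U' ∧ BotApprox T' U' := by
  induction hT using ReflTransGen.head_induction_on generalizing U with
  | refl => exact ⟨U, .refl, hU⟩
  | head hstep _ ih =>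
    obtain ⟨U₁, hred₁, hU₁⟩ := hU.step hstep
    obtain ⟨U', hred₂, hU'⟩ := ih hU₁
    exact ⟨U', hred₁.trans hred₂, hU'⟩

theorem BotApprox.red_var {T U : Tm} {n : ℕ} (hU : BotApprox T U) (hT : Red T (Tm.var n)) :
    Red U (Tm.var n) := by
  obtain ⟨U', hred, hU'⟩ := hU.red hT
  cases hU' with
  | bot hns => exact absurd (headSolvable_var n) hns
  | var => exact hred

/-! ### Left and right inverses -/

theorem red_lam_inv {B Z : Tm} (h : Red (lam B) Z) :
    Z = bot ∨ ∃ B', Z = lam B' ∧ Red B B' := by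
  induction h with
  | refl => exact .inr ⟨B, rfl, .refl⟩
  | tail _ hstep ih =>
    rcases ih with rfl | ⟨B', rfl, hred⟩
    · cases hstep
    · cases hstep with
      | botLam => exact .inl rfl
      | lamC h => exact .inr ⟨_, rfl, hred.tail h⟩

theorem eq_iTm_of_red {P : Tm} (h : Red iTm P) : P = iTm := by
  rcases ReflTransGen.cases_head h with rfl | ⟨_, hstep, -⟩
  · rfl
  · cases hstep with
    | lamC h => cases h

theorem red_iTm_of_conv {X : Tm} (h : Conv X iTm) : Red X iTm := by
  obtain ⟨P, hX, hI⟩ := h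
  rwa [eq_iTm_of_red hI] at hX

theorem red_body_of_comp {A B : Tm} (h : Red (comp A B) iTm) :
    Red (app (lift A 0) (app (lift B 0) (var 0))) (var 0) := by
  rcases red_lam_inv h with h | ⟨_, ⟨⟩, hred⟩
  · cases h
  · exact hred

theorem lift_eq_lam {A P : Tm} {k : ℕ} (h : lift A k = lam P) :
    ∃ A', A = lam A' ∧ P = lift A' (k + 1) := by
  cases A with
  | var n => simp only [lift] at h; split_ifs at h
  | bot => cases h
  | lam M => cases h; exact ⟨M, rfl, rfl⟩
  | app => cases h

theorem Step.lift_inv {T Y : Tm} {k : ℕ} (h : Step (lift T k) Y) : ∃ T₁, Y = lift T₁ k := by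
  induction T generalizing k Y with
  | var n => simp only [lift] at h; split_ifs at h <;> cases h
  | bot => cases h
  | lam M ih =>
    simp only [lift] at h
    generalize hM : lift M (k + 1) = LM at h
    cases h with
    | botLam => exact ⟨bot, rfl⟩
    | lamC h =>
      obtain ⟨T₁, rfl⟩ := ih (hM ▸ h)
      exact ⟨lam T₁, rfl⟩
  | app A B ihA ihB =>
    simp only [lift] at h
    generalize hA : lift A k = LA at h
    generalize hB : lift B k = LB at h
    cases h with
    | beta P N =>
      obtain ⟨A', rfl, rfl⟩ := lift_eq_lam hA
      subst hB
      exact ⟨subst A' 0 B, (lift_subst A' B k).symm⟩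
    | botApp N => exact ⟨bot, rfl⟩
    | appL N h =>
      obtain ⟨T₁, rfl⟩ := ihA (hA ▸ h)
      exact ⟨app T₁ B, by rw [← hB]; rfl⟩
    | appR M h =>
      obtain ⟨T₁, rfl⟩ := ihB (hB ▸ h)
      exact ⟨app A T₁, by rw [← hA]; rfl⟩

theorem not_red_lift_var_zero (T : Tm) : ¬ Red (lift T 0) (var 0) := by
  suffices ∀ Z, Red (lift T 0) Z → ∃ T', Z = lift T' 0 by
    intro h
    obtain ⟨T', hT'⟩ := this _ h
    cases T' with
    | var n => simp [lift] at hT'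
    | _ => cases hT'
  intro Z h
  induction h with
  | refl => exact ⟨T, rfl⟩
  | tail _ hstep ih =>
    obtain ⟨T₁, rfl⟩ := ih
    exact hstep.lift_inv

end Tm

/-- an unsolvable term has neither a left nor a right inverse. -/
theorem unsolvable_no_inverse {M : Tm} (h : ¬ Solvable M) :
    (∀ L, ¬ Tm.Conv (Tm.comp L M) Tm.iTm) ∧ (∀ R, ¬ Tm.Conv (Tm.comp M R) Tm.iTm) := by
  open Tm in
  have hM : ¬ HeadSolvable (lift M 0) := fun hs => h hs.of_lift.solvable
  refine ⟨fun L hL => ?_, fun R hR => ?_⟩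
  · have h₁ : Red (app (lift L 0) (app bot (var 0))) (var 0) :=
      (BotApprox.app (.refl _) (.app (.bot hM) (.var 0))).red_var
        (red_body_of_comp (red_iTm_of_conv hL))
    have h₂ : Red (lift (app L bot) 0) (var 0) :=
      (BotApprox.app (.refl _) (.bot (not_headSolvable_bot_app (var 0)))).red_var h₁
    exact not_red_lift_var_zero _ h₂
  · have h₁ : Red (app bot (app (lift R 0) (var 0))) (var 0) :=
      (BotApprox.app (.bot hM) (.refl _)).red_var (red_body_of_comp (red_iTm_of_conv hR))
    exact not_headSolvable_bot_app _ (.of_red h₁ (headSolvable_var 0))
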